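/- For any locally finite graph G, the combinatorial (physical) Laplacian Δ_G, defined on the finitely supported functions C_c(V) ⊆ ℓ²(V) by (Δ_G f)(x) = Σ_{y ~ x} (f(x) − f(y)), is a symmetric operator which is essentially self-adjoint on C_c(V). -/

import Mathlib

/-!
Summation by parts against finitely supported functions shows both that `Δ` is symmetric and
that its adjoint acts on its domain by the same formula,
`(Δ* v)(x) = Σ_{y ~ x} (v x - v y)`.

A densely defined symmetric `T` with `ker (T* - i) = ker (T* + i) = 0` is essentially
self-adjoint: `‖(T̄ - i) f‖² = ‖T̄ f‖² + ‖f‖²` makes the range of `T̄ - i` closed, its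
orthogonal complement is `ker (T* + i) = 0`, so `T̄ - i` is onto, and then injectivity of
`T* - i` forces `T* = T̄`.

For `Δ` these kernels vanish by the maximum principle: if `v ∈ ℓ²` satisfies `Δ v = z v` with
`re z ≤ 0`, `z ≠ 0`, take `x` where `|v|` is maximal (it exists since `v x → 0` at infinity);
then `|deg x - z| |v x| = |Σ_{y ~ x} v y| ≤ deg x |v x|` while `|deg x - z| > deg x`, so
`v x = 0`.
-/

noncomputable section

open scoped ComplexConjugate

namespace DefIdx

/-- The Hilbert space `ℓ²(V)` of square-summable complex functions on `V`. -/
abbrev L2 (V : Type*) := lp (fun _ : V => ℂ) 2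

lemma memℓp_of_finite {V : Type*} {f : V → ℂ} (h : {x | f x ≠ 0}.Finite) :
    Memℓp f 2 :=
  (memℓp_zero h).of_exponent_ge (by simp)

/-- The subspace `C_c(V)` of finitely supported elements of `ℓ²(V)`. -/
def Cc (V : Type*) : Submodule ℂ (L2 V) where
  carrier := {f | {x | (f : ∀ _ : V, ℂ) x ≠ 0}.Finite}
  zero_mem' := by
    simp only [Set.mem_setOf_eq, lp.coeFn_zero, Pi.zero_apply, ne_eq, not_true_eq_false]
    simp
  add_mem' := by
    intro f g hf hg
    refine (hf.union hg).subset ?_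
    intro x hx
    simp only [Set.mem_setOf_eq, lp.coeFn_add, Pi.add_apply] at hx ⊢
    by_contra hc
    try push_neg at hc
    simp only [Set.mem_union, Set.mem_setOf_eq, not_or, not_not] at hc
    simp [hc.1, hc.2] at hx
  smul_mem' := by
    intro c f hf
    refine hf.subset ?_
    intro x hx
    simp only [Set.mem_setOf_eq, lp.coeFn_smul, Pi.smul_apply, smul_eq_mul] at hx ⊢
    intro h0
    simp [h0] at hx

section Adjacency

variable {V : Type*}

/-- The pointwise action of the adjacency matrix of a locally finite graph. -/
def adjA (G : SimpleGraph V) (hG : G.LocallyFinite) (f : V → ℂ) (x : V) : ℂ :=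
  ∑ y ∈ @SimpleGraph.neighborFinset V G x (hG x), f y

lemma adjA_support (G : SimpleGraph V) (hG : G.LocallyFinite) {f : V → ℂ}
    (hf : {x | f x ≠ 0}.Finite) : {x | adjA G hG f x ≠ 0}.Finite := by
  have hsub : {x | adjA G hG f x ≠ 0} ⊆ ⋃ y ∈ {x | f x ≠ 0}, (G.neighborSet y) := by
    intro x hx
    obtain ⟨y, hy, hfy⟩ := Finset.exists_ne_zero_of_sum_ne_zero hx
    have hadj : G.Adj x y := by
      have := @SimpleGraph.mem_neighborFinset V G x (hG x) y
      exact this.mp hy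
    exact Set.mem_biUnion hfy (SimpleGraph.mem_neighborSet G y x |>.mpr hadj.symm)
  exact (hf.biUnion fun y _ => by haveI := hG y; exact (G.neighborSet y).toFinite).subset hsub

/-- The adjacency operator of a locally finite graph, as a densely defined operator
on `ℓ²(V)` with domain the finitely supported functions. -/
def adjOp (G : SimpleGraph V) (hG : G.LocallyFinite) : L2 V →ₗ.[ℂ] L2 V where
  domain := Cc V
  toFun :=
    { toFun := fun f => ⟨adjA G hG f, memℓp_of_finite (adjA_support G hG f.2)⟩
      map_add' := by
        intro f g
        apply lp.ext
        funext x
        simp only [lp.coeFn_add, Pi.add_apply]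
        show adjA G hG (((f : L2 V) + (g : L2 V) : L2 V)) x = _
        simp only [adjA, lp.coeFn_add, Pi.add_apply]
        exact Finset.sum_add_distrib
      map_smul' := by
        intro c f
        apply lp.ext
        funext x
        simp only [RingHom.id_apply, lp.coeFn_smul, Pi.smul_apply, smul_eq_mul]
        show adjA G hG ((c • (f : L2 V) : L2 V)) x = _
        simp only [adjA, lp.coeFn_smul, Pi.smul_apply, smul_eq_mul]
        exact (Finset.mul_sum _ _ _).symm }

/-- The pointwise action of the combinatorial (physical) Laplacian. -/
def lapA (G : SimpleGraph V) (hG : G.LocallyFinite) (f : V → ℂ) (x : V) : ℂ :=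
  ∑ y ∈ @SimpleGraph.neighborFinset V G x (hG x), (f x - f y)

lemma lapA_support (G : SimpleGraph V) (hG : G.LocallyFinite) {f : V → ℂ}
    (hf : {x | f x ≠ 0}.Finite) : {x | lapA G hG f x ≠ 0}.Finite := by
  have hsub : {x | lapA G hG f x ≠ 0} ⊆
      {x | f x ≠ 0} ∪ ⋃ y ∈ {x | f x ≠ 0}, (G.neighborSet y) := by
    intro x hx
    by_contra hc
    simp only [Set.mem_union, Set.mem_setOf_eq, not_or, not_not] at hc
    obtain ⟨hfx, hmem⟩ := hc
    apply hx
    show lapA G hG f x = 0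
    unfold lapA
    refine Finset.sum_eq_zero fun y hy => ?_
    have hadj : G.Adj x y := (@SimpleGraph.mem_neighborFinset V G x (hG x) y).mp hy
    have hfy : f y = 0 := by
      by_contra hfy
      exact hmem (Set.mem_biUnion hfy ((SimpleGraph.mem_neighborSet G y x).mpr hadj.symm))
    rw [hfx, hfy, sub_zero]
  refine Set.Finite.subset ?_ hsub
  exact hf.union (hf.biUnion fun y _ => by haveI := hG y; exact (G.neighborSet y).toFinite)

/-- The combinatorial (physical) Laplacian of a locally finite graph, as a densely
defined operator on `ℓ²(V)` with domain the finitely supported functions. -/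
def lapOp (G : SimpleGraph V) (hG : G.LocallyFinite) : L2 V →ₗ.[ℂ] L2 V where
  domain := Cc V
  toFun :=
    { toFun := fun f => ⟨lapA G hG f, memℓp_of_finite (lapA_support G hG f.2)⟩
      map_add' := by
        intro f g
        apply lp.ext
        funext x
        simp only [lp.coeFn_add, Pi.add_apply]
        show lapA G hG (((f : L2 V) + (g : L2 V) : L2 V)) x = _
        simp only [lapA, lp.coeFn_add, Pi.add_apply]
        rw [← Finset.sum_add_distrib]
        exact Finset.sum_congr rfl fun y _ => by ring
      map_smul' := by
        intro c f
        apply lp.ext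
        funext x
        simp only [RingHom.id_apply, lp.coeFn_smul, Pi.smul_apply, smul_eq_mul]
        show lapA G hG ((c • (f : L2 V) : L2 V)) x = _
        simp only [lapA, lp.coeFn_smul, Pi.smul_apply, smul_eq_mul]
        rw [Finset.mul_sum]
        exact Finset.sum_congr rfl fun y _ => by ring }

end Adjacency

section Jacobi

/-- The pointwise action of the Jacobi matrix with off-diagonal entries `a n` and
diagonal entries `b n` (with the convention `a (-1) = 0`). -/
def jacA (a b : ℕ → ℝ) (f : ℕ → ℂ) (n : ℕ) : ℂ :=
  (if n = 0 then 0 else (a (n - 1) : ℂ) * f (n - 1)) + (b n : ℂ) * f n + (a n : ℂ) * f (n + 1)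

lemma jacA_support (a b : ℕ → ℝ) {f : ℕ → ℂ} (hf : {n | f n ≠ 0}.Finite) :
    {n | jacA a b f n ≠ 0}.Finite := by
  have hsub : {n | jacA a b f n ≠ 0} ⊆
      (fun m => m + 1) '' {n | f n ≠ 0} ∪ {n | f n ≠ 0} ∪ (fun m => m - 1) '' {n | f n ≠ 0} := by
    intro n hn
    by_contra hc
    simp only [Set.mem_union, not_or] at hc
    apply hn
    show jacA a b f n = 0
    have h1 : f n = 0 := by
      by_contra h; exact hc.1.2 h
    have h3 : f (n + 1) = 0 := by
      by_contra h
      exact hc.2 ⟨n + 1, h, by show n + 1 - 1 = n; omega⟩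
    rcases Nat.eq_zero_or_pos n with h0 | h0
    · subst h0; simp [jacA, h1, h3]
    · have h2 : f (n - 1) = 0 := by
        by_contra h
        exact hc.1.1 ⟨n - 1, h, by show n - 1 + 1 = n; omega⟩
      simp [jacA, h1, h2, h3]
  refine Set.Finite.subset ?_ hsub
  exact ((hf.image _).union hf).union (hf.image _)

/-- The Jacobi matrix with off-diagonal entries `a n > 0` and diagonal entries `b n`,
as a densely defined operator on `ℓ²(ℕ)` with domain the finitely supported sequences. -/
def jacOp (a b : ℕ → ℝ) : L2 ℕ →ₗ.[ℂ] L2 ℕ where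
  domain := Cc ℕ
  toFun :=
    { toFun := fun f => ⟨jacA a b f, memℓp_of_finite (jacA_support a b f.2)⟩
      map_add' := by
        intro f g
        apply lp.ext
        funext n
        simp only [lp.coeFn_add, Pi.add_apply]
        show jacA a b (((f : L2 ℕ) + (g : L2 ℕ) : L2 ℕ)) n = _
        simp only [jacA, lp.coeFn_add, Pi.add_apply]
        split <;> ring
      map_smul' := by
        intro c f
        apply lp.ext
        funext n
        simp only [RingHom.id_apply, lp.coeFn_smul, Pi.smul_apply, smul_eq_mul]
        show jacA a b ((c • (f : L2 ℕ) : L2 ℕ)) n = _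
        simp only [jacA, lp.coeFn_smul, Pi.smul_apply, smul_eq_mul]
        split <;> ring }

end Jacobi

section Eta

variable {H : Type*} [NormedAddCommGroup H] [InnerProductSpace ℂ H] [CompleteSpace H]

/-- The deficiency subspace `ker (T* - z)` of a (partially defined) operator. -/
def defSubspace (T : H →ₗ.[ℂ] H) (z : ℂ) : Submodule ℂ T.adjoint.domain :=
  LinearMap.ker (T.adjoint.toFun - z • T.adjoint.domain.subtype)

/-- The deficiency index `η₊(T) = dim ker (T* - i)`. -/
def etaP (T : H →ₗ.[ℂ] H) : Cardinal := Module.rank ℂ (defSubspace T Complex.I)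

/-- The deficiency index `η₋(T) = dim ker (T* + i)`. -/
def etaM (T : H →ₗ.[ℂ] H) : Cardinal := Module.rank ℂ (defSubspace T (-Complex.I))

/-- A partially defined operator is symmetric if `⟪T f, g⟫ = ⟪f, T g⟫` on its domain. -/
def IsSymm (T : H →ₗ.[ℂ] H) : Prop :=
  ∀ f g : T.domain, (inner ℂ (T f) (g : H) : ℂ) = inner ℂ (f : H) (T g)

/-- A densely defined operator is essentially self-adjoint if its closure is self-adjoint. -/
def EssSelfAdj (T : H →ₗ.[ℂ] H) : Prop :=
  T.closure.adjoint = T.closure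

/-- The restriction of the sum of two partially defined operators to the domain
of the first one, assuming domain inclusion. -/
def sumRestrict (S T : H →ₗ.[ℂ] H) (h : S.domain ≤ T.domain) : H →ₗ.[ℂ] H :=
  ⟨S.domain, S.toFun + T.toFun.comp (Submodule.inclusion h)⟩

/-- The sum of a partially defined operator and a bounded operator, with the
domain of the former. -/
def addBdd (S : H →ₗ.[ℂ] H) (B : H →L[ℂ] H) : H →ₗ.[ℂ] H :=
  ⟨S.domain, S.toFun + (B : H →ₗ[ℂ] H).comp S.domain.subtype⟩

end Eta

section Graphs

variable {V : Type*}

/-- The sphere of radius `n` around the vertex `v` (w.r.t. the graph metric). -/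
def sphere (G : SimpleGraph V) (v : V) (n : ℕ) : Set V := {w | G.dist v w = n}

/-- A connected graph is an antitree with root `v` if every vertex `w ≠ v` at distance
`n ≥ 1` from `v` has exactly `S_{n-1}(v) ∪ S_{n+1}(v)` as its set of neighbours. -/
def IsAntitree (G : SimpleGraph V) (v : V) : Prop :=
  G.Connected ∧ ∀ w, w ≠ v →
    G.neighborSet w = sphere G v (G.dist v w - 1) ∪ sphere G v (G.dist v w + 1)

/-- A function is radially symmetric (w.r.t. the root `v`) if it is constant on
each sphere around `v`. -/
def RadSymm (G : SimpleGraph V) (v : V) (f : V → ℂ) : Prop :=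
  ∀ x y, G.dist v x = G.dist v y → f x = f y

/-- The average of `f` over the sphere of radius `n` around `v`. -/
def sphAvg (G : SimpleGraph V) (v : V) (hfin : ∀ n, (sphere G v n).Finite)
    (f : V → ℂ) (n : ℕ) : ℂ :=
  (1 / ((sphere G v n).ncard : ℂ)) * ∑ y ∈ (hfin n).toFinset, f y

/-- The sphere-averaging map `P`. -/
def sphP (G : SimpleGraph V) (v : V) (hfin : ∀ n, (sphere G v n).Finite)
    (f : V → ℂ) (x : V) : ℂ :=
  sphAvg G v hfin f (G.dist v x)

/-- The disjoint union of `n` copies of a graph. -/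
def copies (G : SimpleGraph V) (n : ℕ) : SimpleGraph (Fin n × V) where
  Adj p q := p.1 = q.1 ∧ G.Adj p.2 q.2
  symm := ⟨fun p q h => ⟨h.1.symm, h.2.symm⟩⟩
  loopless := ⟨fun q h => G.loopless.irrefl q.2 h.2⟩

/-- The disjoint union of copies of a locally finite graph is locally finite. -/
def copiesLF (G : SimpleGraph V) (hG : G.LocallyFinite) (n : ℕ) :
    (copies G n).LocallyFinite := fun p =>
  Set.Finite.fintype (by
    haveI := hG p.2
    have hsub : (copies G n).neighborSet p ⊆ (fun w => (p.1, w)) '' (G.neighborSet p.2) := by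
      rintro ⟨i, w⟩ ⟨h1, h2⟩
      exact ⟨w, h2, by simp [h1]⟩
    exact ((G.neighborSet p.2).toFinite.image _).subset hsub)

end Graphs

end DefIdx

open scoped InnerProductSpace LinearPMap

theorem norm_sub_I_smul_sq {H : Type*} [NormedAddCommGroup H] [InnerProductSpace ℂ H]
    {v x : H} (h : (⟪v, x⟫_ℂ).im = 0) : ‖v - Complex.I • x‖ ^ 2 = ‖v‖ ^ 2 + ‖x‖ ^ 2 := by
  rw [@norm_sub_sq ℂ, inner_smul_right, norm_smul]
  simp [h]

theorem natCast_lt_norm_natCast_sub (n : ℕ) {z : ℂ} (hre : z.re ≤ 0) (hz : z ≠ 0) :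
    (n : ℝ) < ‖(n : ℂ) - z‖ := by
  have hz' := Complex.normSq_pos.mpr hz
  rw [Complex.normSq_apply] at hz'
  refine lt_of_pow_lt_pow_left₀ 2 (norm_nonneg _) ?_
  rw [Complex.sq_norm, Complex.normSq_apply]
  simp only [Complex.sub_re, Complex.natCast_re, Complex.sub_im, Complex.natCast_im]
  nlinarith [(n.cast_nonneg : (0 : ℝ) ≤ n)]

namespace LinearPMap

section Closure

variable {R E F : Type*} [CommRing R] [AddCommGroup E] [AddCommGroup F] [Module R E] [Module R F]
  [TopologicalSpace E] [TopologicalSpace F] [ContinuousAdd E] [ContinuousAdd F]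
  [TopologicalSpace R] [ContinuousSMul R E] [ContinuousSMul R F]

theorem IsClosable.closure_le {T S : E →ₗ.[R] F} (hT : T.IsClosable) (hS : S.IsClosed)
    (h : T ≤ S) : T.closure ≤ S := by
  refine le_of_le_graph ?_
  rw [← hT.graph_closure_eq_closure_graph]
  exact T.graph.topologicalClosure_minimal (le_graph_of_le h) hS

end Closure

section Shift

variable {R E : Type*} [CommRing R] [AddCommGroup E] [Module R E]

theorem eq_of_le_of_surjective_of_injective {A B : E →ₗ.[R] E} (z : R) (hAB : A ≤ B)
    (hA : Function.Surjective (A.toFun - z • A.domain.subtype))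
    (hB : Function.Injective (B.toFun - z • B.domain.subtype)) : A = B := by
  have hdom : B.domain ≤ A.domain := by
    intro u hu
    obtain ⟨x, hx⟩ := hA ((B.toFun - z • B.domain.subtype) ⟨u, hu⟩)
    have hBx : B ⟨x, hAB.1 x.2⟩ = A x := (hAB.2 rfl).symm
    have hux : (⟨x, hAB.1 x.2⟩ : B.domain) = ⟨u, hu⟩ := hB (by
      simpa [LinearPMap.toFun_eq_coe, hBx] using hx)
    have hxu : (x : E) = u := congrArg Subtype.val hux
    exact hxu ▸ x.2
  exact LinearPMap.ext (le_antisymm hAB.1 hdom) fun _ _ _ => hAB.2 rfl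

end Shift

section Adjoint

variable {𝕜 E F : Type*} [RCLike 𝕜] [NormedAddCommGroup E] [InnerProductSpace 𝕜 E]
  [NormedAddCommGroup F] [InnerProductSpace 𝕜 F] [CompleteSpace E] {T : E →ₗ.[𝕜] F}

theorem IsClosable.closure_isFormalAdjoint_adjoint (hd : Dense (T.domain : Set E))
    (hT : T.IsClosable) : T.closure.IsFormalAdjoint T† := by
  intro x y
  have hclosed : _root_.IsClosed {p : E × F | ⟪p.2, (y : F)⟫_𝕜 = ⟪p.1, T† y⟫_𝕜} :=
    isClosed_eq (by fun_prop) (by fun_prop)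
  have hgraph : (T.graph : Set (E × F)) ⊆ {p : E × F | ⟪p.2, (y : F)⟫_𝕜 = ⟪p.1, T† y⟫_𝕜} := by
    rintro ⟨_, _⟩ hp
    obtain ⟨a, rfl, rfl⟩ := (mem_graph_iff T).mp hp
    exact (adjoint_isFormalAdjoint hd).symm a y
  have hx : ((x : E), T.closure x) ∈ _root_.closure (T.graph : Set (E × F)) := by
    rw [← Submodule.topologicalClosure_coe, hT.graph_closure_eq_closure_graph]
    exact T.closure.mem_graph x
  exact hclosed.closure_subset_iff.mpr hgraph hx

theorem IsClosable.adjoint_closure (hd : Dense (T.domain : Set E)) (hT : T.IsClosable) :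
    T.closure† = T† := by
  have hd' : Dense (T.closure.domain : Set E) := hd.mono T.le_closure.1
  refine le_antisymm (IsFormalAdjoint.le_adjoint hd fun x y => ?_)
    (IsFormalAdjoint.le_adjoint hd' (hT.closure_isFormalAdjoint_adjoint hd))
  obtain ⟨x', hx, hTx⟩ := exists_of_le T.le_closure x
  rw [hTx, hx]
  exact (adjoint_isFormalAdjoint hd').symm x' y

end Adjoint

section Symmetric

variable {H : Type*} [NormedAddCommGroup H] [InnerProductSpace ℂ H] [CompleteSpace H]

theorem isClosed_range_sub_I_smul {S : H →ₗ.[ℂ] H} (hS : S.IsClosed)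
    (hsymm : S.IsFormalAdjoint S) :
    _root_.IsClosed (LinearMap.range (S.toFun - Complex.I • S.domain.subtype) : Set H) := by
  have : CompleteSpace S.graph := hS.completeSpace_coe
  let Φ : S.graph →L[ℂ] H :=
    (ContinuousLinearMap.snd ℂ H H - Complex.I • ContinuousLinearMap.fst ℂ H H).comp
      S.graph.subtypeL
  have hrange : (LinearMap.range (S.toFun - Complex.I • S.domain.subtype) : Set H) =
      Set.range Φ := by
    ext b
    constructor
    · rintro ⟨x, rfl⟩
      exact ⟨⟨_, S.mem_graph x⟩, rfl⟩
    · rintro ⟨⟨p, hp⟩, rfl⟩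
      obtain ⟨x, hx, hSx⟩ := (mem_graph_iff S).mp hp
      exact ⟨x, by simp [Φ, ← hx, ← hSx]⟩
  have hΦ : AntilipschitzWith 1 Φ := Φ.antilipschitz_of_bound fun ⟨p, hp⟩ => by
    obtain ⟨x, hx, hSx⟩ := (mem_graph_iff S).mp hp
    have him : (⟪S x, (x : H)⟫_ℂ).im = 0 :=
      Complex.conj_eq_iff_im.mp (by rw [inner_conj_symm]; exact (hsymm x x).symm)
    have hsq := norm_sub_I_smul_sq him
    have hΦp : Φ ⟨p, hp⟩ = S x - Complex.I • (x : H) := by simp [Φ, ← hx, ← hSx]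
    rw [NNReal.coe_one, one_mul, hΦp, Submodule.coe_norm, Prod.norm_def, ← hx, ← hSx]
    refine max_le ?_ ?_ <;>
      refine (pow_le_pow_iff_left₀ (norm_nonneg _) (norm_nonneg _) two_ne_zero).mp ?_ <;>
      nlinarith [sq_nonneg ‖S x‖, sq_nonneg ‖(x : H)‖]
  rw [hrange]
  exact hΦ.isClosed_range Φ.uniformContinuous

end Symmetric

end LinearPMap

namespace DefIdx

open LinearPMap

section Criterion

variable {H : Type*} [NormedAddCommGroup H] [InnerProductSpace ℂ H] [CompleteSpace H]
  {T : H →ₗ.[ℂ] H}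

theorem IsSymm.le_adjoint (hd : Dense (T.domain : Set H)) (hs : IsSymm T) : T ≤ T† :=
  IsFormalAdjoint.le_adjoint hd hs

theorem IsSymm.isClosable (hd : Dense (T.domain : Set H)) (hs : IsSymm T) : T.IsClosable :=
  (adjoint_isClosed hd).isClosable.leIsClosable (hs.le_adjoint hd)

theorem IsSymm.closure_le_adjoint (hd : Dense (T.domain : Set H)) (hs : IsSymm T) :
    T.closure ≤ T† :=
  (hs.isClosable hd).closure_le (adjoint_isClosed hd) (hs.le_adjoint hd)

theorem IsSymm.closure_isFormalAdjoint_closure (hd : Dense (T.domain : Set H)) (hs : IsSymm T) :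
    T.closure.IsFormalAdjoint T.closure := fun x y => by
  obtain ⟨y', hy, hTy⟩ := exists_of_le (hs.closure_le_adjoint hd) y
  rw [hTy, hy]
  exact (hs.isClosable hd).closure_isFormalAdjoint_adjoint hd x y'

theorem eq_zero_of_forall_inner_sub_I_smul_eq_zero (hd : Dense (T.domain : Set H))
    (hM : defSubspace T (-Complex.I) = ⊥) {v : H}
    (hv : ∀ x : T.domain, ⟪T x - Complex.I • (x : H), v⟫_ℂ = 0) : v = 0 := by
  have hadj : ∀ x : T.domain, ⟪-Complex.I • v, (x : H)⟫_ℂ = ⟪v, T x⟫_ℂ := fun x => by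
    have hx := hv x
    rw [inner_sub_left, sub_eq_zero] at hx
    rw [← inner_conj_symm v, hx, inner_smul_left, inner_smul_left, map_mul, inner_conj_symm]
    simp
  have hvdom : v ∈ T†.domain := mem_adjoint_domain_of_exists v ⟨_, hadj⟩
  have hTv : T† ⟨v, hvdom⟩ = -Complex.I • v := adjoint_apply_eq hd _ hadj
  have hmem : (⟨v, hvdom⟩ : T†.domain) ∈ defSubspace T (-Complex.I) := by
    simp [defSubspace, hTv]
  rw [hM] at hmem
  exact congrArg Subtype.val ((Submodule.mem_bot ℂ).mp hmem)

theorem IsSymm.surjective_closure_sub_I_smul (hd : Dense (T.domain : Set H)) (hs : IsSymm T)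
    (hM : defSubspace T (-Complex.I) = ⊥) :
    Function.Surjective (T.closure.toFun - Complex.I • T.closure.domain.subtype) := by
  set R := LinearMap.range (T.closure.toFun - Complex.I • T.closure.domain.subtype)
  have : CompleteSpace R := (isClosed_range_sub_I_smul (hs.isClosable hd).closure_isClosed
    (hs.closure_isFormalAdjoint_closure hd)).completeSpace_coe
  have hR : Rᗮ = ⊥ := by
    refine (Submodule.eq_bot_iff _).mpr fun v hv => ?_
    refine eq_zero_of_forall_inner_sub_I_smul_eq_zero hd hM fun x => ?_
    obtain ⟨x', hx, hTx⟩ := exists_of_le T.le_closure x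
    rw [hTx, hx]
    exact (Submodule.mem_orthogonal R v).mp hv _ ⟨x', rfl⟩
  exact LinearMap.range_eq_top.mp (Submodule.orthogonal_eq_bot_iff.mp hR)

theorem essSelfAdj_of_defSubspace_eq_bot (hd : Dense (T.domain : Set H)) (hs : IsSymm T)
    (hP : defSubspace T Complex.I = ⊥) (hM : defSubspace T (-Complex.I) = ⊥) :
    EssSelfAdj T := by
  have hclosure : T.closure = T† :=
    eq_of_le_of_surjective_of_injective Complex.I (hs.closure_le_adjoint hd)
      (hs.surjective_closure_sub_I_smul hd hM) (LinearMap.ker_eq_bot.mp hP)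
  rw [EssSelfAdj, (hs.isClosable hd).adjoint_closure hd, hclosure]

end Criterion

section Laplacian

variable {V : Type*}

theorem single_mem_Cc [DecidableEq V] (x : V) (a : ℂ) : lp.single 2 x a ∈ Cc V :=
  (Set.finite_singleton x).subset fun y hy => by
    by_contra hyx
    exact hy (by simp [Pi.single_eq_of_ne (Set.mem_singleton_iff.not.mp hyx)])

theorem dense_Cc : Dense (Cc V : Set (L2 V)) := by
  classical
  exact fun f => mem_closure_of_tendsto (lp.hasSum_single ENNReal.ofNat_ne_top f)
    (Filter.Eventually.of_forall fun s => Submodule.sum_mem _ fun x _ => single_mem_Cc x (f x))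

theorem exists_finset_of_mem_Cc {f : L2 V} (hf : f ∈ Cc V) :
    ∃ S : Finset V, ∀ x ∉ S, f x = 0 :=
  ⟨Set.Finite.toFinset hf, fun _ hx => by_contra fun h => hx ((Set.Finite.mem_toFinset hf).mpr h)⟩

theorem inner_eq_sum_of_forall_notMem (a b : L2 V) (S : Finset V) (hb : ∀ x ∉ S, b x = 0) :
    ⟪a, b⟫_ℂ = ∑ x ∈ S, conj (a x) * b x := by
  rw [lp.inner_eq_tsum, tsum_eq_sum (s := S) fun x hx => by simp [hb x hx]]
  simp only [RCLike.inner_apply']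

theorem exists_forall_norm_le (v : L2 V) {x₀ : V} (hx₀ : v x₀ ≠ 0) :
    ∃ x, ∀ y, ‖v y‖ ≤ ‖v x‖ := by
  have hsum : Summable fun x => ‖v x‖ ^ 2 := by
    simpa using v.2.summable (by norm_num : 0 < (2 : ENNReal).toReal)
  have hfin : {x | ‖v x₀‖ ^ 2 ≤ ‖v x‖ ^ 2}.Finite := by
    simpa using hsum.tendsto_cofinite_zero.eventually_lt_const (by positivity : 0 < ‖v x₀‖ ^ 2)
  obtain ⟨x, hx, hmax⟩ :=
    Set.exists_max_image _ (fun x => ‖v x‖ ^ 2) hfin ⟨x₀, le_refl (‖v x₀‖ ^ 2)⟩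
  refine ⟨x, fun y => (pow_le_pow_iff_left₀ (norm_nonneg _) (norm_nonneg _) two_ne_zero).mp ?_⟩
  by_cases hy : ‖v x₀‖ ^ 2 ≤ ‖v y‖ ^ 2
  · exact hmax y hy
  · exact (not_le.mp hy).le.trans hx

variable (G : SimpleGraph V) [hG : G.LocallyFinite]

theorem lapA_eq (f : V → ℂ) (x : V) :
    lapA G hG f x = G.degree x * f x - ∑ y ∈ G.neighborFinset x, f y := by
  rw [lapA, Finset.sum_sub_distrib, Finset.sum_const, nsmul_eq_mul,
    G.card_neighborFinset_eq_degree]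

theorem lapA_conj (f : V → ℂ) (x : V) :
    lapA G hG (fun y => conj (f y)) x = conj (lapA G hG f x) := by
  simp [lapA, map_sum]

theorem sum_neighborFinset_eq_sum_filter [DecidableRel G.Adj] {x : V} {S : Finset V}
    {g : V → ℂ} (hS : ∀ y, G.Adj x y → y ∉ S → g y = 0) :
    ∑ y ∈ G.neighborFinset x, g y = ∑ y ∈ S with G.Adj x y, g y := by
  refine (Finset.sum_subset (fun y hy => ?_) fun y hy hyS => hS y ?_ fun hy' => hyS ?_).symm
  · exact (SimpleGraph.mem_neighborFinset G x y).mpr (Finset.mem_filter.mp hy).2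
  · exact (SimpleGraph.mem_neighborFinset G x y).mp hy
  · exact Finset.mem_filter.mpr ⟨hy', (SimpleGraph.mem_neighborFinset G x y).mp hy⟩

section ClosedNbhd

variable [DecidableEq V]

def closedNbhd (S : Finset V) : Finset V := S ∪ S.biUnion fun x => G.neighborFinset x

theorem subset_closedNbhd (S : Finset V) : S ⊆ closedNbhd G S := Finset.subset_union_left

theorem mem_closedNbhd_of_adj {S : Finset V} {x y : V} (hx : x ∈ S) (hxy : G.Adj x y) :
    y ∈ closedNbhd G S :=
  Finset.mem_union_right _
    (Finset.mem_biUnion.mpr ⟨x, hx, (SimpleGraph.mem_neighborFinset G x y).mpr hxy⟩)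

theorem lapA_eq_zero_of_notMem_closedNbhd {f : V → ℂ} {S : Finset V} (hf : ∀ x ∉ S, f x = 0)
    {x : V} (hx : x ∉ closedNbhd G S) : lapA G hG f x = 0 := by
  have hfx : f x = 0 := hf x fun h => hx (subset_closedNbhd G S h)
  refine Finset.sum_eq_zero fun y hy => ?_
  have hfy : f y = 0 := hf y fun h =>
    hx (mem_closedNbhd_of_adj G h ((SimpleGraph.mem_neighborFinset G x y).mp hy).symm)
  rw [hfx, hfy, sub_zero]

/-- Green's formula; `closedNbhd G S` contains the support of `lapA G hG f`. -/
theorem sum_mul_lapA [DecidableRel G.Adj] (u f : V → ℂ) {S : Finset V}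
    (hf : ∀ x ∉ S, f x = 0) :
    ∑ x ∈ closedNbhd G S, u x * lapA G hG f x = ∑ x ∈ S, lapA G hG u x * f x := by
  have hL : ∀ x ∈ closedNbhd G S, u x * lapA G hG f x =
      G.degree x * u x * f x - ∑ y ∈ S, if G.Adj x y then u x * f y else 0 := fun x _ => by
    rw [lapA_eq, sum_neighborFinset_eq_sum_filter G fun y _ hy => hf y hy, Finset.sum_filter]
    simp only [mul_sub, Finset.mul_sum, mul_ite, mul_zero]
    ring
  have hR : ∀ x ∈ S, lapA G hG u x * f x =
      G.degree x * u x * f x - ∑ y ∈ closedNbhd G S, if G.Adj x y then u y * f x else 0 :=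
    fun x hx => by
    rw [lapA_eq, sum_neighborFinset_eq_sum_filter G (S := closedNbhd G S)
      fun y hxy hy => absurd (mem_closedNbhd_of_adj G hx hxy) hy, Finset.sum_filter]
    simp only [sub_mul, Finset.sum_mul, ite_mul, zero_mul]
  rw [Finset.sum_congr rfl hL, Finset.sum_congr rfl hR, Finset.sum_sub_distrib,
    Finset.sum_sub_distrib, Finset.sum_comm (s := closedNbhd G S)]
  congr 1
  · exact (Finset.sum_subset (subset_closedNbhd G S) fun x _ hx => by rw [hf x hx, mul_zero]).symm
  · exact Finset.sum_congr rfl fun x _ => Finset.sum_congr rfl fun y _ =>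
      if_congr (G.adj_comm y x) rfl rfl

end ClosedNbhd

theorem inner_lapOp_eq_sum (v : L2 V) (f : (lapOp G hG).domain) {S : Finset V}
    (hf : ∀ x ∉ S, (f : L2 V) x = 0) :
    ⟪v, lapOp G hG f⟫_ℂ = ∑ x ∈ S, conj (lapA G hG v x) * (f : L2 V) x := by
  classical
  rw [inner_eq_sum_of_forall_notMem _ _ (closedNbhd G S)
    fun x hx => lapA_eq_zero_of_notMem_closedNbhd G hf hx]
  simp only [← lapA_conj]
  exact sum_mul_lapA G _ _ hf

theorem lapOp_isSymm : IsSymm (lapOp G hG) := fun f g => by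
  obtain ⟨S, hS⟩ := exists_finset_of_mem_Cc g.2
  rw [inner_lapOp_eq_sum G _ g hS, inner_eq_sum_of_forall_notMem _ _ S hS]
  rfl

theorem lapOp_adjoint_apply (v : (lapOp G hG)†.domain) (x : V) :
    ((lapOp G hG)† v : L2 V) x = lapA G hG (v : L2 V) x := by
  classical
  let δ : (lapOp G hG).domain := ⟨lp.single 2 x 1, single_mem_Cc x 1⟩
  have h := adjoint_isFormalAdjoint dense_Cc v δ
  rw [lp.inner_single_right, inner_lapOp_eq_sum G _ δ (S := {x})
    fun y hy => lp.single_apply_ne 2 x 1 (Finset.notMem_singleton.mp hy)] at h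
  exact (starRingEnd ℂ).injective (by simpa [δ, RCLike.inner_apply'] using h)

theorem apply_eq_zero_of_lapA_eq_smul_of_forall_norm_le {f : V → ℂ} {x : V} {z : ℂ}
    (hre : z.re ≤ 0) (hz : z ≠ 0) (heq : lapA G hG f x = z * f x)
    (hmax : ∀ y, ‖f y‖ ≤ ‖f x‖) : f x = 0 := by
  have hsum : ((G.degree x : ℂ) - z) * f x = ∑ y ∈ G.neighborFinset x, f y := by
    rw [lapA_eq] at heq
    linear_combination heq
  have hle : ‖(G.degree x : ℂ) - z‖ * ‖f x‖ ≤ G.degree x * ‖f x‖ := calc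
    _ = ‖∑ y ∈ G.neighborFinset x, f y‖ := by rw [← norm_mul, hsum]
    _ ≤ ∑ y ∈ G.neighborFinset x, ‖f y‖ := norm_sum_le _ _
    _ ≤ ∑ _y ∈ G.neighborFinset x, ‖f x‖ := Finset.sum_le_sum fun y _ => hmax y
    _ = G.degree x * ‖f x‖ := by
      rw [Finset.sum_const, nsmul_eq_mul, G.card_neighborFinset_eq_degree]
  by_contra hfx
  exact (natCast_lt_norm_natCast_sub _ hre hz).not_ge
    (le_of_mul_le_mul_right hle (norm_pos_iff.mpr hfx))

theorem eq_zero_of_lapA_eq_smul (v : L2 V) {z : ℂ} (hre : z.re ≤ 0) (hz : z ≠ 0)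
    (h : ∀ x, lapA G hG v x = z * v x) : v = 0 := by
  by_contra hv
  obtain ⟨x₀, hx₀⟩ : ∃ x, v x ≠ 0 := by
    by_contra! h'
    exact hv (lp.ext (funext h'))
  obtain ⟨x, hmax⟩ := exists_forall_norm_le v hx₀
  have hx := apply_eq_zero_of_lapA_eq_smul_of_forall_norm_le G hre hz (h x) hmax
  exact hx₀ (norm_le_zero_iff.mp (by simpa [hx] using hmax x₀))

theorem defSubspace_lapOp_eq_bot {z : ℂ} (hre : z.re ≤ 0) (hz : z ≠ 0) :
    defSubspace (lapOp G hG) z = ⊥ := by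
  refine (Submodule.eq_bot_iff _).mpr fun v hv => Subtype.ext ?_
  have hv' : (lapOp G hG)† v = z • (v : L2 V) := sub_eq_zero.mp hv
  exact eq_zero_of_lapA_eq_smul G v hre hz fun x => by simp [← lapOp_adjoint_apply, hv']

end Laplacian

theorem laplacian_essentially_selfadjoint_general {V : Type}
    (G : SimpleGraph V) (hG : G.LocallyFinite) :
    IsSymm (lapOp G hG) ∧ EssSelfAdj (lapOp G hG) :=
  ⟨lapOp_isSymm G, essSelfAdj_of_defSubspace_eq_bot dense_Cc (lapOp_isSymm G)
    (defSubspace_lapOp_eq_bot G (by simp) Complex.I_ne_zero)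
    (defSubspace_lapOp_eq_bot G (by simp) (neg_ne_zero.mpr Complex.I_ne_zero))⟩

/-- The combinatorial (physical) Laplacian of a locally finite graph is
a symmetric operator which is essentially self-adjoint on the finitely supported
functions. -/
theorem laplacian_essentially_selfadjoint {V : Type} [Countable V]
    (G : SimpleGraph V) (hG : G.LocallyFinite) :
    IsSymm (lapOp G hG) ∧ EssSelfAdj (lapOp G hG) :=
  laplacian_essentially_selfadjoint_general G hG

end DefIdx
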